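/- (Univariate SCAD thresholding, small-signal case.) Let z ∈ ℝ, Λ > 0, λ > 0, and a > 2, and suppose |z| ≤ λ. Then β̂ = sgn(z)(|z| − Λλ)₊ is a global minimizer over β ∈ ℝ of R(β) = (1/2)(z − β)² + Λ p_λ(|β|). -/

import Mathlib

/-!
On `[0, λ]` the SCAD penalty equals `λ t`, so there the objective is the lasso objective with
threshold `Λλ`, which soft thresholding minimises. Since `|z| ≤ λ`, replacing `|β|` by
`min |β| λ` decreases the quadratic term and, SCAD being nondecreasing, also the penalty; hence
the minimum over all of `ℝ` is attained in `[0, λ]`.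
-/

noncomputable section

/-- Derivative of the SCAD penalty: `p_λ′(u) = λ[1{u ≤ λ} + (aλ−u)₊/((a−1)λ)·1{u > λ}]`. -/
def scadDeriv (l a u : ℝ) : ℝ :=
  l * ((if u ≤ l then 1 else 0) + max (a * l - u) 0 / ((a - 1) * l) * (if l < u then 1 else 0))

/-- The SCAD penalty `p_λ(t) = ∫₀ᵗ p_λ′(u) du`. -/
def scad (l a t : ℝ) : ℝ := ∫ u in (0:ℝ)..t, scadDeriv l a u

open Set

section ScadPenalty

variable {l a : ℝ}

lemma scadDeriv_of_le {u : ℝ} (hu : u ≤ l) : scadDeriv l a u = l := by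
  simp [scadDeriv, hu, not_lt.mpr hu]

lemma scadDeriv_nonneg (hl : 0 ≤ l) (ha : 1 ≤ a) (u : ℝ) : 0 ≤ scadDeriv l a u := by
  have hden : 0 ≤ (a - 1) * l := mul_nonneg (by linarith) hl
  unfold scadDeriv
  refine mul_nonneg hl (add_nonneg ?_ (mul_nonneg (div_nonneg (le_max_right _ _) hden) ?_)) <;>
    split_ifs <;> norm_num

lemma scadDeriv_le (hl : 0 ≤ l) (ha : 1 ≤ a) (u : ℝ) : scadDeriv l a u ≤ l := by
  rcases le_or_gt u l with hul | hlu
  · exact (scadDeriv_of_le hul).le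
  · have hden : 0 ≤ (a - 1) * l := mul_nonneg (by linarith) hl
    have hfrac : max (a * l - u) 0 / ((a - 1) * l) ≤ 1 :=
      div_le_one_of_le₀ (max_le (by linarith) hden) hden
    simp only [scadDeriv, if_neg (not_le.mpr hlu), if_pos hlu]
    nlinarith

lemma measurable_scadDeriv : Measurable (scadDeriv l a) := by
  unfold scadDeriv
  refine Measurable.const_mul (Measurable.add ?_ (Measurable.mul ?_ ?_)) l
  · exact Measurable.ite measurableSet_Iic measurable_const measurable_const
  · exact ((measurable_const.sub measurable_id).max measurable_const).div_const _
  · exact Measurable.ite measurableSet_Ioi measurable_const measurable_const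

lemma intervalIntegrable_scadDeriv (hl : 0 ≤ l) (ha : 1 ≤ a) (s t : ℝ) :
    IntervalIntegrable (scadDeriv l a) MeasureTheory.volume s t := by
  refine (intervalIntegrable_const (c := l)).mono_fun
    measurable_scadDeriv.aestronglyMeasurable (Filter.Eventually.of_forall fun u => ?_)
  dsimp only
  rw [Real.norm_of_nonneg (scadDeriv_nonneg hl ha u), Real.norm_of_nonneg hl]
  exact scadDeriv_le hl ha u

lemma scad_of_le {t : ℝ} (ht : 0 ≤ t) (htl : t ≤ l) : scad l a t = l * t := by
  rw [scad, intervalIntegral.integral_congr (g := fun _ => l), intervalIntegral.integral_const,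
    smul_eq_mul, sub_zero, mul_comm]
  intro u hu
  rw [uIcc_of_le ht] at hu
  exact scadDeriv_of_le (hu.2.trans htl)

lemma monotone_scad (hl : 0 ≤ l) (ha : 1 ≤ a) : Monotone (scad l a) := by
  intro s t hst
  have hdiff : scad l a t - scad l a s = ∫ u in s..t, scadDeriv l a u :=
    intervalIntegral.integral_interval_sub_left (intervalIntegrable_scadDeriv hl ha _ _)
      (intervalIntegrable_scadDeriv hl ha _ _)
  have hnonneg : 0 ≤ ∫ u in s..t, scadDeriv l a u :=
    intervalIntegral.integral_nonneg hst fun u _ => scadDeriv_nonneg hl ha u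
  linarith

end ScadPenalty

theorem isMinOn_softThreshold (w c : ℝ) :
    IsMinOn (fun t => 1 / 2 * (w - t) ^ 2 + c * t) (Ici 0) (max (w - c) 0) := by
  refine isMinOn_iff.mpr fun t (ht : 0 ≤ t) => ?_
  rcases le_or_gt w c with hwc | hcw
  · rw [max_eq_right (by linarith)]
    nlinarith [mul_nonneg ht (by linarith : 0 ≤ c - w)]
  · rw [max_eq_left (by linarith)]
    nlinarith [sq_nonneg (t - (w - c))]

theorem isMinOn_scad_objective {Λ l a w : ℝ} (hΛ : 0 ≤ Λ) (hl : 0 ≤ l) (ha : 1 ≤ a)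
    (hw : w ≤ l) :
    IsMinOn (fun t => 1 / 2 * (w - t) ^ 2 + Λ * scad l a t) (Ici 0) (max (w - Λ * l) 0) := by
  refine isMinOn_iff.mpr fun t (ht : 0 ≤ t) => ?_
  have hm : max (w - Λ * l) 0 ≤ l := max_le (by nlinarith) hl
  have hclip : (w - min t l) ^ 2 ≤ (w - t) ^ 2 := by
    rcases le_total t l with htl | hlt
    · rw [min_eq_left htl]
    · rw [min_eq_right hlt]; nlinarith
  calc 1 / 2 * (w - max (w - Λ * l) 0) ^ 2 + Λ * scad l a (max (w - Λ * l) 0)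
      = 1 / 2 * (w - max (w - Λ * l) 0) ^ 2 + Λ * l * max (w - Λ * l) 0 := by
        rw [scad_of_le (le_max_right _ _) hm, mul_assoc]
    _ ≤ 1 / 2 * (w - min t l) ^ 2 + Λ * l * min t l :=
        isMinOn_iff.mp (isMinOn_softThreshold w (Λ * l)) _ (le_min ht hl)
    _ = 1 / 2 * (w - min t l) ^ 2 + Λ * scad l a (min t l) := by
        rw [scad_of_le (le_min ht hl) (min_le_right t l), mul_assoc]
    _ ≤ 1 / 2 * (w - t) ^ 2 + Λ * scad l a t := by
        gcongr
        exact monotone_scad hl ha (min_le_left t l)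

lemma abs_sign_mul_and_sq_sub_sign_mul {z m : ℝ} (hm : 0 ≤ m) (hmz : m ≤ |z|) :
    |Real.sign z * m| = m ∧ (z - Real.sign z * m) ^ 2 = (|z| - m) ^ 2 := by
  rcases lt_trichotomy z 0 with hz | rfl | hz
  · simp only [Real.sign_of_neg hz, abs_of_neg hz, neg_one_mul, abs_neg, abs_of_nonneg hm,
      true_and]
    ring
  · obtain rfl : m = 0 := le_antisymm (by simpa using hmz) hm
    simp
  · simp only [Real.sign_of_pos hz, abs_of_pos hz, one_mul, abs_of_nonneg hm, and_self]

/-- univariate SCAD thresholding, small-signal case. -/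
theorem scad_thresholding_small_signal
    (z Λ l a : ℝ) (hΛ : 0 < Λ) (hl : 0 < l) (ha : 2 < a)
    (hz : |z| ≤ l) :
    ∀ β : ℝ,
      1 / 2 * (z - Real.sign z * max (|z| - Λ * l) 0) ^ 2
          + Λ * scad l a |Real.sign z * max (|z| - Λ * l) 0|
        ≤ 1 / 2 * (z - β) ^ 2 + Λ * scad l a |β| := by
  intro β
  obtain ⟨habs, hsq⟩ := abs_sign_mul_and_sq_sub_sign_mul (z := z)
    (le_max_right _ _ : 0 ≤ max (|z| - Λ * l) 0) (max_le (by nlinarith) (abs_nonneg z))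
  rw [habs, hsq]
  calc _ ≤ 1 / 2 * (|z| - |β|) ^ 2 + Λ * scad l a |β| :=
        isMinOn_iff.mp (isMinOn_scad_objective hΛ.le hl.le (by linarith) hz) _ (abs_nonneg β)
    _ ≤ 1 / 2 * (z - β) ^ 2 + Λ * scad l a |β| := by
        have : (|z| - |β|) ^ 2 ≤ (z - β) ^ 2 :=
          sq_le_sq.mpr (abs_abs_sub_abs_le_abs_sub z β)
        linarith

end
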